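/- Let Y be a finite alphabet and let N > n > 0 be integers; put α = (N−n)/N and g(α) = √(α(1−α))/(√α + √(1−α)). Let μ be an arbitrary probability distribution on Y^N, let the random string Y ∈ Y^N have law μ, and independently let T be a uniformly random n-element subset of {1,…,N}; let Y' = Y_T be the subsequence of Y indexed by T and Y'' = Y_{T^c} the remaining digits. Then for every ε > 0, Pr{ ‖P_{Y'} − P_{Y''}‖₁ ≥ ε } ≤ 2·|P_N(Y)|²·exp(−N·(g(α)·ε)²/2), where ‖·‖₁ is the total variation (ℓ¹) distance between the two empirical distributions. -/

import Mathlib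

/- STATEMENT 13 (Random sampling lemma): if Y ∈ 𝒴^N has arbitrary law μ and T is an
   independent uniformly random n-subset of {1,…,N}, then with Y' = Y_T, Y'' = Y_{Tᶜ},
   Pr{‖P_{Y'} − P_{Y''}‖₁ ≥ ε} ≤ 2·|P_N(𝒴)|²·exp(−N·(g(α)ε)²/2),
   where α = (N−n)/N and g(α) = √(α(1−α))/(√α+√(1−α)). -/

open scoped BigOperators

noncomputable section

/-- Probability distribution on a finite set. -/
def IsProbDist {Y : Type*} [Fintype Y] (p : Y → ℝ) : Prop :=
  (∀ a, 0 ≤ p a) ∧ ∑ a, p a = 1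

open Classical in
/-- The type (empirical distribution) of a string `y ∈ Yⁿ`. -/
def typeOf {Y : Type*} [Fintype Y] {n : ℕ} (y : Fin n → Y) : Y → ℝ :=
  fun a => ((Finset.univ.filter fun i => y i = a).card : ℝ) / n

/-- `P_N(Y)`, the set of all types of sequences in `Y^N`. -/
def typesSet (Y : Type*) [Fintype Y] (N : ℕ) : Set (Y → ℝ) :=
  {Q | ∃ y : Fin N → Y, Q = typeOf y}

open Classical in
/-- The empirical distribution of the subsequence of `y` indexed by `T`. -/
def typeOn {Y : Type*} [Fintype Y] {N : ℕ} (y : Fin N → Y) (T : Finset (Fin N)) : Y → ℝ :=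
  fun a => ((T.filter fun i => y i = a).card : ℝ) / T.card

set_option linter.unusedSectionVars false
section Aux
open Real Finset
noncomputable def klT (x y : ℝ) : ℝ := x * Real.log (x/y)


/-- Padé bound for log. -/
lemma logPade {t : ℝ} (ht : 1 ≤ t) : 2*(t-1)/(t+1) ≤ Real.log t := by
  set φ : ℝ → ℝ := fun t => Real.log t - 2*(t-1)/(t+1) with hφ
  have key : MonotoneOn φ (Set.Ici 1) := by
    apply monotoneOn_of_deriv_nonneg (convex_Ici 1)
    · apply ContinuousOn.sub
      · exact Real.continuousOn_log.mono (by intro x hx; simp at hx ⊢; intro h; simp [h] at hx; linarith)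
      · apply ContinuousOn.div (by fun_prop) (by fun_prop)
        intro x hx; simp at hx; intro h; linarith
    · rw [interior_Ici]
      intro x hx
      simp only [Set.mem_Ioi] at hx
      have h1 : (0:ℝ) < x := by linarith
      have h2 : x + 1 ≠ 0 := by positivity
      exact ((Real.hasDerivAt_log h1.ne').sub
        (((hasDerivAt_id x).sub_const 1).const_mul 2 |>.div
          ((hasDerivAt_id x).add_const 1) h2)).differentiableAt.differentiableWithinAt
    · rw [interior_Ici]
      intro x hx
      simp only [Set.mem_Ioi] at hx
      have h1 : (0:ℝ) < x := by linarith
      have h2 : x + 1 ≠ 0 := by positivity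
      have hd : HasDerivAt φ (x⁻¹ - (2*1*(x+1) - 2*(x-1)*1)/(x+1)^2) x := by
        exact (Real.hasDerivAt_log h1.ne').sub
          (((hasDerivAt_id x).sub_const 1).const_mul 2 |>.div
            ((hasDerivAt_id x).add_const 1) h2)
      rw [hd.deriv]
      rw [sub_nonneg, div_le_iff₀ (by positivity), inv_mul_eq_div, le_div_iff₀ h1]
      nlinarith [sq_nonneg (x-1)]
  have h0 : φ 1 = 0 := by simp [hφ]
  have := key (Set.mem_Ici.2 le_rfl) (Set.mem_Ici.2 ht) ht
  rw [h0] at this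
  simpa [hφ, sub_nonneg] using this

lemma logPade' {t : ℝ} (ht0 : 0 < t) (ht : t ≤ 1) : Real.log t ≤ 2*(t-1)/(t+1) := by
  have h := logPade (t := t⁻¹) (by rw [le_inv_comm₀ one_pos ht0] at *; simpa using ht)
  rw [Real.log_inv] at h
  have h1 : t + 1 > 0 := by linarith
  have : 2*(t⁻¹-1)/(t⁻¹+1) = -(2*(t-1)/(t+1)) := by
    field_simp
    ring
  rw [this] at h
  linarith


noncomputable def psiF : ℝ → ℝ := fun t => t * Real.log t - t + 1 - 3*(t-1)^2/(2*(t+2))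

lemma psiF_hasDeriv {x : ℝ} (hx : 0 < x) :
    HasDerivAt psiF ((Real.log x + 1) - 1 -
      (3*(2*(x-1)) * (2*(x+2)) - 3*(x-1)^2*2)/(2*(x+2))^2) x := by
  have h2 : 2*(x+2) ≠ 0 := by positivity
  have hnum : HasDerivAt (fun t : ℝ => 3*(t-1)^2) (3*(2*(x-1))) x := by
    have : HasDerivAt (fun t : ℝ => (t-1)^2) (2*(x-1)^1*1) x :=
      ((hasDerivAt_id x).sub_const 1).pow 2
    simpa using this.const_mul 3
  have hden : HasDerivAt (fun t : ℝ => 2*(t+2)) 2 x := by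
    simpa using ((hasDerivAt_id x).add_const 2).const_mul 2
  have hq := hnum.div hden h2
  have hmul := (Real.hasDerivAt_mul_log hx.ne')
  exact ((hmul.sub (hasDerivAt_id x)).add_const 1).sub (by exact hq)

lemma psiF_nonneg {t : ℝ} (ht : 0 < t) : 0 ≤ psiF t := by
  have h1 : psiF 1 = 0 := by norm_num [psiF]
  rcases le_total 1 t with h | h
  · have key : MonotoneOn psiF (Set.Ici 1) := by
      apply monotoneOn_of_deriv_nonneg (convex_Ici 1)
      · intro x hx
        simp only [Set.mem_Ici] at hx
        exact (psiF_hasDeriv (by linarith)).continuousAt.continuousWithinAt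
      · rw [interior_Ici]
        intro x hx
        simp only [Set.mem_Ioi] at hx
        exact (psiF_hasDeriv (by linarith)).differentiableAt.differentiableWithinAt
      · rw [interior_Ici]
        intro x hx
        simp only [Set.mem_Ioi] at hx
        have hx0 : (0:ℝ) < x := by linarith
        rw [(psiF_hasDeriv hx0).deriv]
        have hq : (3*(2*(x-1)) * (2*(x+2)) - 3*(x-1)^2*2)/(2*(x+2))^2 ≤ 2*(x-1)/(x+1) := by
          rw [div_le_div_iff₀ (by positivity) (by positivity)]
          nlinarith [pow_pos (show (0:ℝ) < x - 1 + 1 by linarith) 3, sq_nonneg (x-1),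
            mul_nonneg (mul_nonneg (sub_nonneg.2 hx.le) (sub_nonneg.2 hx.le)) (sub_nonneg.2 hx.le)]
        have hl := logPade (le_of_lt hx)
        linarith
    have := key (Set.mem_Ici.2 le_rfl) (Set.mem_Ici.2 h) h
    rw [h1] at this; exact this
  · have key : AntitoneOn psiF (Set.Ioc 0 1) := by
      apply antitoneOn_of_deriv_nonpos (convex_Ioc 0 1)
      · intro x hx
        exact (psiF_hasDeriv hx.1).continuousAt.continuousWithinAt
      · rw [interior_Ioc]
        intro x hx
        exact (psiF_hasDeriv hx.1).differentiableAt.differentiableWithinAt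
      · rw [interior_Ioc]
        intro x hx
        obtain ⟨hx0, hx1⟩ := hx
        rw [(psiF_hasDeriv hx0).deriv]
        have hq : 2*(x-1)/(x+1) ≤ (3*(2*(x-1)) * (2*(x+2)) - 3*(x-1)^2*2)/(2*(x+2))^2 := by
          rw [div_le_div_iff₀ (by positivity) (by positivity)]
          nlinarith [mul_nonneg (mul_nonneg (sub_nonneg.2 hx1.le) (sub_nonneg.2 hx1.le)) (sub_nonneg.2 hx1.le)]
        have hl := logPade' hx0 hx1.le
        linarith
    have := key (Set.mem_Ioc.2 ⟨ht, h⟩) (Set.mem_Ioc.2 ⟨one_pos, le_rfl⟩) h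
    rw [h1] at this; exact this


lemma pinsker_term {p q : ℝ} (hp : 0 ≤ p) (hq : 0 ≤ q) (h0 : p = 0 → q = 0) :
    3*(q-p)^2/(2*(q+2*p)) ≤ q*Real.log (q/p) - q + p := by
  rcases eq_or_lt_of_le hp with hp0 | hp0
  · have hq0 : q = 0 := h0 hp0.symm
    simp [← hp0, hq0]
  rcases eq_or_lt_of_le hq with hq0 | hq0
  · rw [← hq0]
    simp only [zero_mul, zero_sub, sub_zero, neg_add_eq_sub, zero_add, zero_sub]
    rw [div_le_iff₀ (by positivity)]
    nlinarith
  · have key : 0 ≤ (q/p) * Real.log (q/p) - q/p + 1 - 3*(q/p-1)^2/(2*(q/p+2)) := by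
      have := psiF_nonneg (t := q/p) (by positivity)
      unfold psiF at this
      exact this
    have hmul : 0 ≤ p * ((q/p) * Real.log (q/p) - q/p + 1 - 3*(q/p-1)^2/(2*(q/p+2))) :=
      mul_nonneg hp key
    have heq : p * ((q/p) * Real.log (q/p) - q/p + 1 - 3*(q/p-1)^2/(2*(q/p+2)))
        = q*Real.log (q/p) - q + p - 3*(q-p)^2/(2*(q+2*p)) := by
      have hp' : p ≠ 0 := hp0.ne'
      have h2 : q/p + 2 ≠ 0 := by positivity
      have h3 : q + 2*p ≠ 0 := by positivity
      field_simp
    rw [heq] at hmul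
    linarith

lemma pinsker {Y : Type*} [Fintype Y] (q p : Y → ℝ) (hq : ∀ a, 0 ≤ q a) (hp : ∀ a, 0 ≤ p a)
    (h0 : ∀ a, p a = 0 → q a = 0) (hq1 : ∑ a, q a = 1) (hp1 : ∑ a, p a = 1) :
    (∑ a, |q a - p a|)^2 ≤ 2 * ∑ a, q a * Real.log (q a / p a) := by
  set D := ∑ a, q a * Real.log (q a / p a) with hD
  have hsum : ∑ a, (q a * Real.log (q a / p a) - q a + p a) = D := by
    rw [Finset.sum_add_distrib, Finset.sum_sub_distrib, hq1, hp1]; ring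
  have hhalf : (3:ℝ)/2 * ∑ a, (q a - p a)^2/(q a + 2*p a) ≤ D := by
    rw [← hsum, Finset.mul_sum]
    apply Finset.sum_le_sum
    intro a _
    have := pinsker_term (hp a) (hq a) (h0 a)
    calc (3:ℝ)/2 * ((q a - p a)^2/(q a + 2*p a)) = 3*(q a-p a)^2/(2*(q a+2*p a)) := by
          rw [← mul_div_mul_comm]
      _ ≤ _ := this
  have hCS : (∑ a, |q a - p a|)^2 ≤ (∑ a, (q a - p a)^2/(q a + 2*p a)) * ∑ a, (q a + 2*p a) := by
    have := Finset.sum_mul_sq_le_sq_mul_sq Finset.univ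
      (fun a => |q a - p a| / Real.sqrt (q a + 2*p a)) (fun a => Real.sqrt (q a + 2*p a))
    have he1 : ∀ a : Y, |q a - p a| / Real.sqrt (q a + 2*p a) * Real.sqrt (q a + 2*p a)
        = |q a - p a| := by
      intro a
      rcases eq_or_lt_of_le (by have := hq a; have := hp a; linarith : (0:ℝ) ≤ q a + 2*p a) with h | h
      · have hqa : q a = 0 := by nlinarith [hq a, hp a]
        have hpa : p a = 0 := by nlinarith [hq a, hp a]
        simp [hqa, hpa]
      · rw [div_mul_cancel₀]
        exact (Real.sqrt_pos.2 h).ne'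
    have he2 : ∀ a : Y, (|q a - p a| / Real.sqrt (q a + 2*p a))^2
        = (q a - p a)^2/(q a + 2*p a) := by
      intro a
      rw [div_pow, sq_abs, Real.sq_sqrt (by have := hq a; have := hp a; linarith)]
    have he3 : ∀ a : Y, (Real.sqrt (q a + 2*p a))^2 = q a + 2*p a := fun a =>
      Real.sq_sqrt (by have := hq a; have := hp a; linarith)
    calc (∑ a, |q a - p a|)^2
        = (∑ a, |q a - p a| / Real.sqrt (q a + 2*p a) * Real.sqrt (q a + 2*p a))^2 := by
          rw [Finset.sum_congr rfl fun a _ => (he1 a).symm]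
      _ ≤ (∑ a, (|q a - p a| / Real.sqrt (q a + 2*p a))^2) * ∑ a, (Real.sqrt (q a + 2*p a))^2 :=
          this
      _ = _ := by rw [Finset.sum_congr rfl fun a _ => he2 a, Finset.sum_congr rfl fun a _ => he3 a]
  have hsum3 : ∑ a, (q a + 2*p a) = 3 := by
    rw [Finset.sum_add_distrib, hq1, ← Finset.mul_sum, hp1]; ring
  rw [hsum3] at hCS
  have hS : 0 ≤ ∑ a, (q a - p a)^2/(q a + 2*p a) := by
    apply Finset.sum_nonneg; intro a _
    apply div_nonneg (sq_nonneg _) (by have := hq a; have := hp a; linarith)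
  linarith

lemma binom_term_le_one {k j : ℕ} (hj : j ≤ k) {x : ℝ} (hx0 : 0 ≤ x) (hx1 : x ≤ 1) :
    (k.choose j : ℝ) * x^j * (1-x)^(k-j) ≤ 1 := by
  have h := add_pow x (1-x) k
  have h1 : ((x + (1-x)))^k = 1 := by norm_num
  rw [h1] at h
  rw [show (k.choose j : ℝ) * x^j * (1-x)^(k-j) = x^j * (1-x)^(k-j) * (k.choose j : ℝ) by ring]
  refine le_trans ?_ (le_of_eq h.symm)
  apply Finset.single_le_sum (f := fun m => x^m * (1-x)^(k-m) * (k.choose m : ℝ))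
  · intro m _
    have : (0:ℝ) ≤ 1 - x := by linarith
    positivity
  · exact Finset.mem_range.2 (Nat.lt_succ_of_le hj)

section MaxTerm
variable {N n : ℕ}

/-- the binomial term at m. -/
noncomputable def binTerm (N n m : ℕ) : ℝ :=
  (N.choose m : ℝ) * ((n:ℝ)/N)^m * (1 - (n:ℝ)/N)^(N-m)

lemma binTerm_nonneg (hN : n ≤ N) (hN0 : 0 < N) (m : ℕ) : 0 ≤ binTerm N n m := by
  have hγ : (0:ℝ) ≤ 1 - (n:ℝ)/N := by
    rw [sub_nonneg, div_le_one (by positivity)]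
    exact_mod_cast hN
  unfold binTerm
  positivity

lemma choose_step_nat_up (hm : m < n) (hN : n ≤ N) :
    N.choose m * (N - n) ≤ N.choose (m+1) * n := by
  have key : N.choose m * (N - n) * (m+1) ≤ N.choose (m+1) * n * (m+1) := by
    have h1 : N.choose (m+1) * (m+1) = N.choose m * (N - m) := Nat.choose_succ_right_eq N m
    calc N.choose m * (N - n) * (m+1) = N.choose m * ((N-n) * (m+1)) := by ring
      _ ≤ N.choose m * ((N - m) * n) := by
          apply Nat.mul_le_mul_left
          exact Nat.mul_le_mul (Nat.sub_le_sub_left (le_of_lt hm) N) hm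
      _ = N.choose (m+1) * (m+1) * n := by rw [h1]; ring
      _ = N.choose (m+1) * n * (m+1) := by ring
  exact Nat.le_of_mul_le_mul_right key (Nat.succ_pos m)

lemma choose_step_nat_down (hm : n ≤ m) :
    N.choose (m+1) * n ≤ N.choose m * (N - n) := by
  have key : N.choose (m+1) * n * (m+1) ≤ N.choose m * (N - n) * (m+1) := by
    have h1 : N.choose (m+1) * (m+1) = N.choose m * (N - m) := Nat.choose_succ_right_eq N m
    calc N.choose (m+1) * n * (m+1) = N.choose (m+1) * (m+1) * n := by ring
      _ = N.choose m * ((N - m) * n) := by rw [h1]; ring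
      _ ≤ N.choose m * ((N - n) * (m+1)) := by
          apply Nat.mul_le_mul_left
          exact Nat.mul_le_mul (Nat.sub_le_sub_left hm N) (Nat.le_succ_of_le hm)
      _ = N.choose m * (N - n) * (m+1) := by ring
  exact Nat.le_of_mul_le_mul_right key (Nat.succ_pos m)

lemma cast_gamma (hN : n ≤ N) (hN0 : 0 < N) : ((N - n : ℕ) : ℝ) / N = 1 - (n:ℝ)/N := by
  rw [Nat.cast_sub hN]
  field_simp

lemma binTerm_step_up (hm : m < n) (hN : n < N) : binTerm N n m ≤ binTerm N n (m+1) := by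
  have hN0 : 0 < N := lt_of_le_of_lt (Nat.zero_le n) hN
  have hβ : (0:ℝ) ≤ (n:ℝ)/N := by positivity
  have hγ : (0:ℝ) ≤ 1 - (n:ℝ)/N := by
    rw [sub_nonneg, div_le_one (by positivity)]
    exact_mod_cast hN.le
  have hmN : m < N := lt_trans hm hN
  have hpow : (1 - (n:ℝ)/N)^(N-m) = (1 - (n:ℝ)/N)^(N-(m+1)) * (1 - (n:ℝ)/N) := by
    rw [← pow_succ]
    congr 1
    omega
  have hkey : (N.choose m : ℝ) * (1 - (n:ℝ)/N) ≤ (N.choose (m+1) : ℝ) * ((n:ℝ)/N) := by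
    have := choose_step_nat_up hm hN.le
    have hc : ((N.choose m * (N - n) : ℕ) : ℝ) ≤ ((N.choose (m+1) * n : ℕ) : ℝ) := by
      exact_mod_cast this
    push_cast at hc
    rw [← cast_gamma hN.le hN0]
    rw [div_eq_mul_inv, div_eq_mul_inv, ← mul_assoc, ← mul_assoc]
    apply mul_le_mul_of_nonneg_right _ (by positivity)
    exact hc
  unfold binTerm
  rw [hpow]
  calc (N.choose m : ℝ) * ((n:ℝ)/N)^m * ((1 - (n:ℝ)/N)^(N-(m+1)) * (1 - (n:ℝ)/N))
      = ((N.choose m : ℝ) * (1 - (n:ℝ)/N)) * (((n:ℝ)/N)^m * (1 - (n:ℝ)/N)^(N-(m+1))) := by ring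
    _ ≤ ((N.choose (m+1) : ℝ) * ((n:ℝ)/N)) * (((n:ℝ)/N)^m * (1 - (n:ℝ)/N)^(N-(m+1))) := by
        apply mul_le_mul_of_nonneg_right hkey (by positivity)
    _ = (N.choose (m+1) : ℝ) * ((n:ℝ)/N)^(m+1) * (1 - (n:ℝ)/N)^(N-(m+1)) := by ring
lemma binTerm_step_down (hm : n ≤ m) (hmN : m < N) : binTerm N n (m+1) ≤ binTerm N n m := by
  have hN0 : 0 < N := lt_of_le_of_lt (Nat.zero_le m) hmN
  have hβ : (0:ℝ) ≤ (n:ℝ)/N := by positivity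
  have hγ : (0:ℝ) ≤ 1 - (n:ℝ)/N := by
    rw [sub_nonneg, div_le_one (by positivity)]
    exact_mod_cast (le_of_lt (lt_of_le_of_lt hm hmN))
  have hpow : (1 - (n:ℝ)/N)^(N-m) = (1 - (n:ℝ)/N)^(N-(m+1)) * (1 - (n:ℝ)/N) := by
    rw [← pow_succ]
    congr 1
    omega
  have hkey : (N.choose (m+1) : ℝ) * ((n:ℝ)/N) ≤ (N.choose m : ℝ) * (1 - (n:ℝ)/N) := by
    have := choose_step_nat_down (N := N) hm
    have hc : ((N.choose (m+1) * n : ℕ) : ℝ) ≤ ((N.choose m * (N - n) : ℕ) : ℝ) := by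
      exact_mod_cast this
    push_cast [Nat.cast_sub (le_of_lt (lt_of_le_of_lt hm hmN))] at hc
    rw [show (1 - (n:ℝ)/N) = ((N:ℝ) - n)/N by field_simp]
    rw [div_eq_mul_inv, div_eq_mul_inv, ← mul_assoc, ← mul_assoc]
    apply mul_le_mul_of_nonneg_right _ (by positivity)
    exact hc
  unfold binTerm
  rw [hpow]
  calc (N.choose (m+1) : ℝ) * ((n:ℝ)/N)^(m+1) * (1 - (n:ℝ)/N)^(N-(m+1))
      = ((N.choose (m+1) : ℝ) * ((n:ℝ)/N)) * (((n:ℝ)/N)^m * (1 - (n:ℝ)/N)^(N-(m+1))) := by ring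
    _ ≤ ((N.choose m : ℝ) * (1 - (n:ℝ)/N)) * (((n:ℝ)/N)^m * (1 - (n:ℝ)/N)^(N-(m+1))) := by
        apply mul_le_mul_of_nonneg_right hkey (by positivity)
    _ = (N.choose m : ℝ) * ((n:ℝ)/N)^m * ((1 - (n:ℝ)/N)^(N-(m+1)) * (1 - (n:ℝ)/N)) := by ring
    _ = _ := by rw [← hpow]

lemma binTerm_le_max (hN : n < N) : ∀ m, m ≤ N → binTerm N n m ≤ binTerm N n n := by
  have up : ∀ d m, m + d = n → binTerm N n m ≤ binTerm N n n := by
    intro d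
    induction d with
    | zero => intro m h; simp at h; rw [h]
    | succ d ih =>
      intro m h
      have h1 : m < n := by omega
      exact le_trans (binTerm_step_up h1 hN) (ih (m+1) (by omega))
  intro m hm
  rcases le_total m n with h | h
  · exact up (n - m) m (by omega)
  · -- downward: induction on m from n
    clear hm
    induction m with
    | zero => exact up n 0 (by omega)
    | succ m ih =>
      rcases Nat.lt_or_ge m n with h1 | h1
      · have : m + 1 = n := by omega
        rw [this]
      · rcases Nat.lt_or_ge m N with h2 | h2
        · exact le_trans (binTerm_step_down h1 h2) (ih (by omega))
        · -- m ≥ N: choose (m+1) = 0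
          have : N.choose (m+1) = 0 := Nat.choose_eq_zero_of_lt (by omega)
          have h0 : binTerm N n (m+1) = 0 := by
            unfold binTerm
            rw [this]
            simp
          rw [h0]
          exact binTerm_nonneg hN.le (lt_of_le_of_lt (Nat.zero_le n) hN) n
end MaxTerm

lemma one_le_maxterm {N n : ℕ} (hN : n < N) : 1 ≤ ((N:ℝ)+1) * binTerm N n n := by
  have hN0 : 0 < N := lt_of_le_of_lt (Nat.zero_le n) hN
  have h := add_pow ((n:ℝ)/N) (1-(n:ℝ)/N) N
  have h1 : (((n:ℝ)/N) + (1-(n:ℝ)/N))^N = 1 := by norm_num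
  rw [h1] at h
  have h2 : ∑ m ∈ Finset.range (N+1), ((n:ℝ)/N)^m * (1-(n:ℝ)/N)^(N-m) * (N.choose m : ℝ)
      = ∑ m ∈ Finset.range (N+1), binTerm N n m := by
    apply Finset.sum_congr rfl
    intro m _
    unfold binTerm
    ring
  rw [h2] at h
  have h3 : ∑ m ∈ Finset.range (N+1), binTerm N n m
      ≤ ∑ _m ∈ Finset.range (N+1), binTerm N n n := by
    apply Finset.sum_le_sum
    intro m hm
    exact binTerm_le_max hN m (by simp at hm; omega)
  rw [Finset.sum_const, Finset.card_range] at h3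
  calc (1:ℝ) = ∑ m ∈ Finset.range (N+1), binTerm N n m := h
    _ ≤ (N+1) • binTerm N n n := h3
    _ = ((N:ℝ)+1) * binTerm N n n := by
        rw [nsmul_eq_mul]
        push_cast
        ring


lemma letter_bound {N n k j : ℕ} (hn : 0 < n) (hN : n < N) (hjk : j ≤ k) (hkN : k ≤ N) :
    (k.choose j : ℝ) * ((n:ℝ)/N)^j * (1-(n:ℝ)/N)^(k-j) ≤
      Real.exp (-((n:ℝ) * klT ((j:ℝ)/n) ((k:ℝ)/N)
        + ((N:ℝ)-n) * klT (((k:ℝ)-j)/((N:ℝ)-n)) ((k:ℝ)/N))) := by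
  have hN0 : (0:ℝ) < N := by exact_mod_cast lt_of_le_of_lt (Nat.zero_le n) hN
  have hn0 : (0:ℝ) < n := by exact_mod_cast hn
  have hNn : (0:ℝ) < (N:ℝ) - n := by
    have : (n:ℝ) < N := by exact_mod_cast hN
    linarith
  set β : ℝ := (n:ℝ)/N with hβ
  have hβ0 : 0 < β := by positivity
  have hγ0 : 0 < 1 - β := by
    rw [hβ, sub_pos, div_lt_one hN0]
    exact_mod_cast hN
  have hγval : 1 - β = ((N:ℝ)-n)/N := by rw [hβ]; field_simp
  rcases Nat.eq_zero_or_pos k with hk0 | hk0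
  · subst hk0
    have hj0 : j = 0 := Nat.le_zero.1 hjk
    subst hj0
    simp [klT]
  have hk0' : (0:ℝ) < k := by exact_mod_cast hk0
  have hp0 : (0:ℝ) < (k:ℝ)/N := by positivity
  rcases eq_or_lt_of_le hjk with hjk' | hjlt
  · -- j = k
    subst hjk'
    have h2 : klT (((j:ℝ)-(j:ℝ))/((N:ℝ)-n)) ((j:ℝ)/N) = 0 := by simp [klT]
    have e1 : ((j:ℝ)/n)/((j:ℝ)/N) = β⁻¹ := by
      rw [hβ]; field_simp
    have h1 : (n:ℝ) * klT ((j:ℝ)/n) ((j:ℝ)/N) = (j:ℝ) * Real.log β⁻¹ := by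
      unfold klT
      rw [e1]
      field_simp
    rw [h2, h1, Real.log_inv, Nat.sub_self, pow_zero, Nat.choose_self]
    rw [show -((j:ℝ) * -Real.log β + ((N:ℝ)-(n:ℝ)) * 0) = (j:ℝ) * Real.log β by ring]
    rw [Real.exp_nat_mul, Real.exp_log hβ0]
    norm_num
  · -- j < k
    rcases Nat.eq_zero_or_pos j with hj0 | hj0
    · subst hj0
      simp only [Nat.cast_zero, sub_zero, Nat.sub_zero, Nat.choose_zero_right,
        Nat.cast_one, one_mul, pow_zero, zero_div]
      have h1 : klT (0:ℝ) ((k:ℝ)/N) = 0 := by simp [klT]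
      have e1 : ((k:ℝ)/((N:ℝ)-n))/((k:ℝ)/N) = (1-β)⁻¹ := by
        rw [hγval]; field_simp
      have h2 : ((N:ℝ)-n) * klT ((k:ℝ)/((N:ℝ)-n)) ((k:ℝ)/N)
          = (k:ℝ) * Real.log (1-β)⁻¹ := by
        unfold klT
        rw [e1]
        field_simp
      rw [h1, h2, Real.log_inv]
      rw [show -((n:ℝ) * 0 + (k:ℝ) * -Real.log (1-β)) = (k:ℝ) * Real.log (1-β) by ring]
      rw [Real.exp_nat_mul, Real.exp_log hγ0]
    · -- 0 < j < k
      have hj0' : (0:ℝ) < j := by exact_mod_cast hj0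
      have hkj : (0:ℝ) < (k:ℝ) - j := by
        have : (j:ℝ) < k := by exact_mod_cast hjlt
        linarith
      have hq1 : (0:ℝ) < (j:ℝ)/n := by positivity
      have hq2 : (0:ℝ) < ((k:ℝ)-j)/((N:ℝ)-n) := by positivity
      have hE : -((n:ℝ) * klT ((j:ℝ)/n) ((k:ℝ)/N)
          + ((N:ℝ)-n) * klT (((k:ℝ)-j)/((N:ℝ)-n)) ((k:ℝ)/N))
          = (j:ℝ) * Real.log (β * ((k:ℝ)/j)) + ((k:ℝ)-j) * Real.log ((1-β) * ((k:ℝ)/((k:ℝ)-j))) := by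
        unfold klT
        have e1 : ((j:ℝ)/n)/((k:ℝ)/N) = (β * ((k:ℝ)/j))⁻¹ := by
          rw [hβ]; field_simp
        have e2 : (((k:ℝ)-j)/((N:ℝ)-n))/((k:ℝ)/N) = ((1-β) * ((k:ℝ)/((k:ℝ)-j)))⁻¹ := by
          rw [hγval]; field_simp
        rw [e1, e2, Real.log_inv, Real.log_inv]
        field_simp
        ring
      have hx1 : (0:ℝ) < β * ((k:ℝ)/j) := by positivity
      have hx2 : (0:ℝ) < (1-β) * ((k:ℝ)/((k:ℝ)-j)) := by
        apply mul_pos hγ0 (div_pos hk0' hkj)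
      rw [hE, Real.exp_add]
      rw [show ((k:ℝ)-(j:ℝ)) * Real.log ((1-β) * ((k:ℝ)/((k:ℝ)-j)))
          = ((k-j:ℕ):ℝ) * Real.log ((1-β) * ((k:ℝ)/((k:ℝ)-j))) by rw [Nat.cast_sub hjk]]
      rw [Real.exp_nat_mul, Real.exp_nat_mul, Real.exp_log hx1, Real.exp_log hx2]
      have hbin := binom_term_le_one (k := k) (j := j) hjk
        (x := (j:ℝ)/k) (by positivity) (by
          rw [div_le_one hk0']
          exact_mod_cast hjlt.le)
      have h1x : 1 - (j:ℝ)/k = ((k:ℝ)-j)/k := by field_simp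
      rw [h1x] at hbin
      have key : (k.choose j : ℝ) ≤ ((k:ℝ)/j)^j * ((k:ℝ)/((k:ℝ)-j))^(k-j) := by
        have hpos : (0:ℝ) < ((j:ℝ)/k)^j * (((k:ℝ)-j)/k)^(k-j) :=
          mul_pos (pow_pos (div_pos hj0' hk0') _) (pow_pos (div_pos hkj hk0') _)
        rw [← mul_le_mul_iff_of_pos_right hpos]
        calc (k.choose j : ℝ) * (((j:ℝ)/k)^j * (((k:ℝ)-j)/k)^(k-j))
            = (k.choose j : ℝ) * ((j:ℝ)/k)^j * (((k:ℝ)-j)/k)^(k-j) := by ring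
          _ ≤ 1 := hbin
          _ = (((k:ℝ)/j) * ((j:ℝ)/k))^j * ((((k:ℝ)/((k:ℝ)-j))) * (((k:ℝ)-j)/k))^(k-j) := by
              have e1 : ((k:ℝ)/j) * ((j:ℝ)/k) = 1 := by
                field_simp
              have e2 : ((k:ℝ)/((k:ℝ)-j)) * (((k:ℝ)-j)/k) = 1 := by
                field_simp [hkj.ne']
              rw [e1, e2, one_pow, one_pow, mul_one]
          _ = ((k:ℝ)/j)^j * ((k:ℝ)/((k:ℝ)-j))^(k-j) * (((j:ℝ)/k)^j * (((k:ℝ)-j)/k)^(k-j)) := by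
              rw [mul_pow, mul_pow]
              ring
      calc (k.choose j : ℝ) * β^j * (1-β)^(k-j)
          ≤ (((k:ℝ)/j)^j * ((k:ℝ)/((k:ℝ)-j))^(k-j)) * β^j * (1-β)^(k-j) := by
            apply mul_le_mul_of_nonneg_right _ (by positivity)
            apply mul_le_mul_of_nonneg_right key (by positivity)
        _ = (β * ((k:ℝ)/j))^j * ((1-β) * ((k:ℝ)/((k:ℝ)-j)))^(k-j) := by
            rw [mul_pow, mul_pow]
            ring


lemma jvec_bound {Y : Type*} [Fintype Y] {N n : ℕ} (hn : 0 < n) (hN : n < N)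
    (k j : Y → ℕ) (hjk : ∀ a, j a ≤ k a) (hkN : ∑ a, k a = N) (hjn : ∑ a, j a = n)
    {ε : ℝ} (hε : 0 < ε)
    (hD : ε ≤ ∑ a, |(j a:ℝ)/n - ((k a:ℝ)-(j a:ℝ))/((N:ℝ)-n)|) :
    ((∏ a, (k a).choose (j a) : ℕ) : ℝ) ≤
      ((N:ℝ)+1) * (N.choose n : ℝ) *
        Real.exp (-((N:ℝ) * ((n:ℝ)/N) * (1-(n:ℝ)/N) * ε^2 / 2)) := by
  classical
  have hN0 : (0:ℝ) < N := by exact_mod_cast lt_of_le_of_lt (Nat.zero_le n) hN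
  have hn0 : (0:ℝ) < n := by exact_mod_cast hn
  have hNn : (0:ℝ) < (N:ℝ) - n := by
    have : (n:ℝ) < N := by exact_mod_cast hN
    linarith
  set β : ℝ := (n:ℝ)/N with hβ
  have hβ0 : 0 < β := by positivity
  have hγ0 : 0 < 1 - β := by
    rw [hβ, sub_pos, div_lt_one hN0]
    exact_mod_cast hN
  set q1 : Y → ℝ := fun a => (j a : ℝ)/n with hq1def
  set q2 : Y → ℝ := fun a => ((k a:ℝ)-(j a:ℝ))/((N:ℝ)-n) with hq2def
  set p : Y → ℝ := fun a => (k a : ℝ)/N with hpdef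
  set D : ℝ := ∑ a, |q1 a - q2 a| with hDdef
  have hDε : ε ≤ D := hD
  have hD0 : 0 < D := lt_of_lt_of_le hε hDε
  -- sums
  have hsum_q1 : ∑ a, q1 a = 1 := by
    rw [hq1def, ← Finset.sum_div]
    rw [show ∑ a, (j a:ℝ) = ((∑ a, j a : ℕ) : ℝ) by push_cast; rfl, hjn]
    field_simp
  have hsum_p : ∑ a, p a = 1 := by
    rw [hpdef, ← Finset.sum_div]
    rw [show ∑ a, (k a:ℝ) = ((∑ a, k a : ℕ) : ℝ) by push_cast; rfl, hkN]
    field_simp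
  have hsum_q2 : ∑ a, q2 a = 1 := by
    rw [hq2def, ← Finset.sum_div, Finset.sum_sub_distrib]
    rw [show ∑ a, (k a:ℝ) = ((∑ a, k a : ℕ) : ℝ) by push_cast; rfl, hkN]
    rw [show ∑ a, (j a:ℝ) = ((∑ a, j a : ℕ) : ℝ) by push_cast; rfl, hjn]
    field_simp
  -- nonneg
  have hq1nn : ∀ a, 0 ≤ q1 a := fun a => by positivity
  have hq2nn : ∀ a, 0 ≤ q2 a := fun a => by
    apply div_nonneg _ hNn.le
    have := hjk a
    simp only [sub_nonneg]
    exact_mod_cast this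
  have hpnn : ∀ a, 0 ≤ p a := fun a => by positivity
  have hk0 : ∀ a, p a = 0 → k a = 0 := by
    intro a h
    rw [hpdef] at h
    field_simp at h
    exact_mod_cast h
  have h0q1 : ∀ a, p a = 0 → q1 a = 0 := by
    intro a h
    have hk := hk0 a h
    have : j a = 0 := by have := hjk a; omega
    simp [hq1def, this]
  have h0q2 : ∀ a, p a = 0 → q2 a = 0 := by
    intro a h
    have hk := hk0 a h
    have : j a = 0 := by have := hjk a; omega
    simp [hq2def, this, hk]
  -- per-component relation
  have hrel1 : ∀ a, |q1 a - p a| = (1-β) * |q1 a - q2 a| := by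
    intro a
    have : q1 a - p a = (1-β) * (q1 a - q2 a) := by
      rw [hq1def, hq2def, hpdef, hβ]
      field_simp
      ring
    rw [this, abs_mul, abs_of_nonneg hγ0.le]
  have hrel2 : ∀ a, |q2 a - p a| = β * |q1 a - q2 a| := by
    intro a
    have : q2 a - p a = -(β * (q1 a - q2 a)) := by
      rw [hq1def, hq2def, hpdef, hβ]
      field_simp
      ring
    rw [this, abs_neg, abs_mul, abs_of_nonneg hβ0.le]
  have hsum1 : ∑ a, |q1 a - p a| = (1-β) * D := by
    rw [hDdef, Finset.mul_sum]
    exact Finset.sum_congr rfl fun a _ => hrel1 a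
  have hsum2 : ∑ a, |q2 a - p a| = β * D := by
    rw [hDdef, Finset.mul_sum]
    exact Finset.sum_congr rfl fun a _ => hrel2 a
  -- Pinsker bounds
  have hpin1 := pinsker q1 p hq1nn hpnn h0q1 hsum_q1 hsum_p
  have hpin2 := pinsker q2 p hq2nn hpnn h0q2 hsum_q2 hsum_p
  rw [hsum1] at hpin1
  rw [hsum2] at hpin2
  -- exponent bound
  set E : ℝ := ∑ a, ((n:ℝ) * klT (q1 a) (p a) + ((N:ℝ)-n) * klT (q2 a) (p a)) with hEdef
  have hEsplit : E = (n:ℝ) * (∑ a, q1 a * Real.log (q1 a / p a))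
      + ((N:ℝ)-n) * (∑ a, q2 a * Real.log (q2 a / p a)) := by
    rw [hEdef, Finset.sum_add_distrib, Finset.mul_sum, Finset.mul_sum]
    congr 1
  have hElb : (N:ℝ) * β * (1-β) * ε^2 / 2 ≤ E := by
    have hnβ : (n:ℝ) = N * β := by rw [hβ]; field_simp
    have hNγ : (N:ℝ) - n = N * (1-β) := by rw [hβ]; field_simp
    have hD2 : ε^2 ≤ D^2 := pow_le_pow_left₀ hε.le hDε 2
    rw [hEsplit]
    have h1 : ((1-β)*D)^2 ≤ 2 * ∑ a, q1 a * Real.log (q1 a / p a) := hpin1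
    have h2 : (β*D)^2 ≤ 2 * ∑ a, q2 a * Real.log (q2 a / p a) := hpin2
    have e1 : (n:ℝ) * (∑ a, q1 a * Real.log (q1 a / p a)) ≥ (n:ℝ) * (((1-β)*D)^2 / 2) := by
      apply mul_le_mul_of_nonneg_left _ hn0.le
      linarith
    have e2 : ((N:ℝ)-n) * (∑ a, q2 a * Real.log (q2 a / p a)) ≥ ((N:ℝ)-n) * ((β*D)^2 / 2) := by
      apply mul_le_mul_of_nonneg_left _ hNn.le
      linarith
    have heq : (n:ℝ) * (((1-β)*D)^2/2) + ((N:ℝ)-n) * ((β*D)^2/2) = (N:ℝ)*β*(1-β)*D^2/2 := by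
      rw [hnβ]
      ring
    have hc : (0:ℝ) ≤ (N:ℝ)*β*(1-β)/2 := by positivity
    have hmono := mul_le_mul_of_nonneg_left hD2 (by positivity : (0:ℝ) ≤ (N:ℝ)*β*(1-β))
    linarith
  -- per-letter bound
  have hletter : ∀ a : Y, ((k a).choose (j a) : ℝ) * β^(j a) * (1-β)^(k a - j a)
      ≤ Real.exp (-((n:ℝ) * klT (q1 a) (p a) + ((N:ℝ)-n) * klT (q2 a) (p a))) := by
    intro a
    have hkaN : k a ≤ N := by
      rw [← hkN]
      exact Finset.single_le_sum (fun _ _ => Nat.zero_le _) (Finset.mem_univ a)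
    exact letter_bound hn hN (hjk a) hkaN
  have hprodle : (∏ a, (((k a).choose (j a) : ℝ) * β^(j a) * (1-β)^(k a - j a)))
      ≤ Real.exp (-E) := by
    calc (∏ a, (((k a).choose (j a) : ℝ) * β^(j a) * (1-β)^(k a - j a)))
        ≤ ∏ a, Real.exp (-((n:ℝ) * klT (q1 a) (p a) + ((N:ℝ)-n) * klT (q2 a) (p a))) := by
          apply Finset.prod_le_prod
          · intro a _
            have h1 : (0:ℝ) ≤ 1 - β := hγ0.le
            positivity
          · intro a _
            exact hletter a
      _ = Real.exp (∑ a, -((n:ℝ) * klT (q1 a) (p a) + ((N:ℝ)-n) * klT (q2 a) (p a))) :=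
          (Real.exp_sum _ _).symm
      _ = Real.exp (-E) := by
          rw [hEdef, ← Finset.sum_neg_distrib]
  have hsubsum : ∑ a, (k a - j a) = N - n := by
    have h1 : ∑ a, (k a - j a) = ∑ a, k a - ∑ a, j a := by
      apply Finset.sum_tsub_distrib
      intro a _
      exact hjk a
    rw [h1, hkN, hjn]
  have hsplit : ∏ a, (((k a).choose (j a) : ℝ) * β^(j a) * (1-β)^(k a - j a))
      = (∏ a, ((k a).choose (j a):ℝ)) * β^n * (1-β)^(N-n) := by
    rw [Finset.prod_mul_distrib, Finset.prod_mul_distrib,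
      Finset.prod_pow_eq_pow_sum, Finset.prod_pow_eq_pow_sum, hjn, hsubsum]
  have hPC : (0:ℝ) ≤ ∏ a, ((k a).choose (j a):ℝ) :=
    Finset.prod_nonneg fun a _ => by positivity
  have hchoosepos : (0:ℝ) < ((N:ℝ)+1) * (N.choose n : ℝ) := by
    have := Nat.choose_pos hN.le
    have : (0:ℝ) < (N.choose n : ℝ) := by exact_mod_cast this
    positivity
  have hcast : ((∏ a, (k a).choose (j a) : ℕ) : ℝ) = ∏ a, ((k a).choose (j a):ℝ) := by
    push_cast
    rfl
  rw [hcast]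
  calc (∏ a, ((k a).choose (j a):ℝ))
      ≤ (∏ a, ((k a).choose (j a):ℝ)) * (((N:ℝ)+1) * binTerm N n n) := by
        nth_rewrite 1 [← mul_one (∏ a, ((k a).choose (j a):ℝ))]
        exact mul_le_mul_of_nonneg_left (one_le_maxterm hN) hPC
    _ = (((N:ℝ)+1) * (N.choose n : ℝ)) *
        ((∏ a, ((k a).choose (j a):ℝ)) * β^n * (1-β)^(N-n)) := by
        unfold binTerm
        ring
    _ ≤ (((N:ℝ)+1) * (N.choose n : ℝ)) * Real.exp (-E) := by
        apply mul_le_mul_of_nonneg_left _ hchoosepos.le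
        rw [← hsplit]
        exact hprodle
    _ ≤ (((N:ℝ)+1) * (N.choose n : ℝ)) *
        Real.exp (-((N:ℝ) * β * (1-β) * ε^2 / 2)) := by
        apply mul_le_mul_of_nonneg_left _ hchoosepos.le
        exact Real.exp_le_exp.2 (neg_le_neg hElb)

section TypesCount
open Classical

variable {Y : Type*} [Fintype Y] {N n : ℕ}

lemma typesSet_finite (Y : Type*) [Fintype Y] (N : ℕ) : (typesSet Y N).Finite := by
  have : typesSet Y N = Set.range (fun y : Fin N → Y => typeOf y) := by
    ext Q
    simp [typesSet, Set.mem_range, eq_comm]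
  rw [this]
  exact Set.finite_range _

lemma card_filter_val_lt (m : ℕ) (hm : m ≤ N) :
    ((Finset.univ.filter fun i : Fin N => (i : ℕ) < m).card) = m := by
  rcases eq_or_lt_of_le hm with h | h
  · have : (Finset.univ.filter fun i : Fin N => (i : ℕ) < m) = Finset.univ := by
      apply Finset.filter_true_of_mem
      intro i _
      have := i.isLt
      omega
    rw [this, Finset.card_univ, Fintype.card_fin, h]
  · have : (Finset.univ.filter fun i : Fin N => (i : ℕ) < m) = Finset.Iio (⟨m, h⟩ : Fin N) := by
      ext i
      simp [Fin.lt_def]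
    rw [this, Fin.card_Iio]

/-- `N+1 ≤ |typesSet|` when `Y` has two distinct elements. -/
lemma le_ncard_typesSet (hN0 : 0 < N) {b c : Y} (hbc : b ≠ c) :
    (N:ℝ) + 1 ≤ ((typesSet Y N).ncard : ℝ) := by
  have hfin := typesSet_finite Y N
  have hN0' : (0:ℝ) < N := by exact_mod_cast hN0
  have key : N + 1 ≤ (typesSet Y N).ncard := by
    rw [Set.ncard_eq_toFinset_card _ hfin]
    calc N + 1 = (Finset.range (N+1)).card := (Finset.card_range _).symm
      _ ≤ _ := by
        apply Finset.card_le_card_of_injOn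
          (f := fun m => typeOf (fun i : Fin N => if (i : ℕ) < m then b else c))
        · intro m _
          rw [Finset.mem_coe, Set.Finite.mem_toFinset]
          exact ⟨_, rfl⟩
        · intro m hm m' hm' heq
          simp only [Finset.coe_range, Set.mem_Iio] at hm hm'
          have hcount : ∀ m'' : ℕ, m'' ≤ N →
              typeOf (fun i : Fin N => if (i : ℕ) < m'' then b else c) b = (m'' : ℝ)/N := by
            intro m'' hm''
            unfold typeOf
            congr 2
            rw [show (Finset.univ.filter fun i : Fin N => (if (i : ℕ) < m'' then b else c) = b)
                = Finset.univ.filter fun i : Fin N => (i : ℕ) < m'' by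
              apply Finset.filter_congr
              intro i _
              by_cases h : (i : ℕ) < m'' <;> simp [h, hbc.symm]]
            exact card_filter_val_lt m'' hm''
          have h1 := hcount m (by omega)
          have h2 := hcount m' (by omega)
          have : (m : ℝ)/N = (m' : ℝ)/N := by
            rw [← h1, ← h2]
            exact congrFun heq b
          field_simp at this
          exact_mod_cast this
  exact_mod_cast key

variable (y : Fin N → Y)

/-- counts of letters in `y`. -/
def cnt (a : Y) : ℕ := (Finset.univ.filter fun i => y i = a).card

lemma cnt_sum : ∑ a, cnt y a = N := by
  rw [show ∑ a, cnt y a = ∑ a ∈ Finset.univ, (Finset.univ.filter fun i => y i = a).card from rfl]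
  rw [← Finset.card_eq_sum_card_fiberwise (fun x _ => Finset.mem_univ (y x))]
  simp

/-- count decomposition over `T` and `Tᶜ`. -/
lemma cnt_split (T : Finset (Fin N)) (a : Y) :
    cnt y a = (T.filter fun i => y i = a).card + (Tᶜ.filter fun i => y i = a).card := by
  unfold cnt
  rw [← Finset.card_union_of_disjoint, ← Finset.filter_union, Finset.union_compl]
  exact Finset.disjoint_filter_filter disjoint_compl_right

/-- count function of `y` restricted to `T`. -/
def cntOn (T : Finset (Fin N)) : Y → ℕ := fun a => (T.filter fun i => y i = a).card

lemma fiber_card_le (j : Y → ℕ) (S : Finset (Finset (Fin N))) (hS : ∀ T ∈ S, cntOn y T = j) :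
    S.card ≤ ∏ a, (cnt y a).choose (j a) := by
  have key := Finset.card_le_card_of_injOn
    (t := Finset.univ.pi (fun a => (Finset.univ.filter fun i => y i = a).powersetCard (j a)))
    (f := fun T : Finset (Fin N) => (fun a _ => T.filter fun i => y i = a : (a : Y) → a ∈ Finset.univ → Finset (Fin N)))
    (by
      intro T hT
      rw [Finset.mem_coe, Finset.mem_pi]
      intro a _
      rw [Finset.mem_powersetCard]
      constructor
      · exact Finset.filter_subset_filter _ (Finset.subset_univ T)
      · exact congrFun (hS T hT) a)
    (by
      intro T1 h1 T2 h2 heq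
      ext i
      have h : T1.filter (fun i' => y i' = y i) = T2.filter (fun i' => y i' = y i) :=
        congrFun (congrFun heq (y i)) (Finset.mem_univ (y i))
      constructor
      · intro hi
        have : i ∈ T1.filter fun i' => y i' = y i := Finset.mem_filter.2 ⟨hi, rfl⟩
        rw [h] at this
        exact (Finset.mem_filter.1 this).1
      · intro hi
        have : i ∈ T2.filter fun i' => y i' = y i := Finset.mem_filter.2 ⟨hi, rfl⟩
        rw [← h] at this
        exact (Finset.mem_filter.1 this).1)
  rw [Finset.card_pi] at key
  calc S.card ≤ _ := key
    _ = ∏ a, (cnt y a).choose (j a) := by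
      apply Finset.prod_congr rfl
      intro a _
      rw [Finset.card_powersetCard]
      rfl

lemma card_image_le_ncard [Nonempty Y] (hN0 : 0 < N) (S : Finset (Finset (Fin N)))
    (hS : ∀ T ∈ S, T.card = n) :
    (S.image (cntOn y)).card ≤ (typesSet Y N).ncard := by
  have hfin := typesSet_finite Y N
  set a₀ : Y := Classical.arbitrary Y with ha₀
  set g : (Y → ℕ) → (Y → ℝ) :=
    fun j a => (((j a + (if a = a₀ then N - n else 0) : ℕ)) : ℝ)/N with hg
  rw [Set.ncard_eq_toFinset_card _ hfin]
  apply Finset.card_le_card_of_injOn g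
  · intro j hj
    obtain ⟨T, hT, hTj⟩ := Finset.mem_image.1 hj
    rw [Finset.mem_coe, Set.Finite.mem_toFinset]
    refine ⟨fun i => if i ∈ T then y i else a₀, ?_⟩
    funext a
    unfold typeOf
    rw [hg]
    congr 1
    have hsplit : (Finset.univ.filter fun i => (if i ∈ T then y i else a₀) = a).card
        = (T.filter fun i => (if i ∈ T then y i else a₀) = a).card
          + (Tᶜ.filter fun i => (if i ∈ T then y i else a₀) = a).card := by
      rw [← Finset.card_union_of_disjoint
        (Finset.disjoint_filter_filter disjoint_compl_right), ← Finset.filter_union,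
        Finset.union_compl]
    have h1 : (T.filter fun i => (if i ∈ T then y i else a₀) = a)
        = T.filter fun i => y i = a := by
      apply Finset.filter_congr
      intro i hi
      rw [if_pos hi]
    have h2 : (Tᶜ.filter fun i => (if i ∈ T then y i else a₀) = a).card
        = if a = a₀ then N - n else 0 := by
      have he : (Tᶜ.filter fun i => (if i ∈ T then y i else a₀) = a)
          = Tᶜ.filter fun _ => a₀ = a := by
        apply Finset.filter_congr
        intro i hi
        rw [Finset.mem_compl] at hi
        rw [if_neg hi]
      rw [he]
      by_cases haa : a = a₀
      · rw [if_pos haa]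
        rw [Finset.filter_true_of_mem (fun _ _ => haa.symm)]
        rw [Finset.card_compl, Fintype.card_fin, hS T hT]
      · rw [if_neg haa]
        rw [Finset.filter_false_of_mem (fun _ _ => fun h => haa (h.symm))]
        exact Finset.card_empty
    have h3 : j a = (T.filter fun i => y i = a).card := by
      rw [← hTj]
      rfl
    rw [hsplit, h1, h2]
    simp only [h3]
  · intro j1 _ j2 _ heq
    funext a
    have h := congrFun heq a
    rw [hg] at h
    simp only at h
    have hN0' : (N:ℝ) ≠ 0 := by
      have : (0:ℝ) < N := by exact_mod_cast hN0
      exact this.ne'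
    rw [div_eq_div_iff hN0' hN0'] at h
    have hcast : ((j1 a + (if a = a₀ then N - n else 0) : ℕ) : ℝ)
        = ((j2 a + (if a = a₀ then N - n else 0) : ℕ) : ℝ) :=
      mul_right_cancel₀ hN0' h
    have : j1 a + (if a = a₀ then N - n else 0) = j2 a + (if a = a₀ then N - n else 0) := by
      exact_mod_cast hcast
    omega


lemma count_bound [Nonempty Y] (hn : 0 < n) (hN : n < N) {ε : ℝ} (hε : 0 < ε)
    (y : Fin N → Y) :
    ((Finset.univ.filter fun T : Finset (Fin N) =>
        T.card = n ∧ ε ≤ ∑ a, |typeOn y T a - typeOn y Tᶜ a|).card : ℝ) ≤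
      ((typesSet Y N).ncard : ℝ) * (((N:ℝ)+1) * (N.choose n : ℝ) *
        Real.exp (-((N:ℝ) * ((n:ℝ)/N) * (1-(n:ℝ)/N) * ε^2 / 2))) := by
  set badT := Finset.univ.filter fun T : Finset (Fin N) =>
    T.card = n ∧ ε ≤ ∑ a, |typeOn y T a - typeOn y Tᶜ a| with hbadT
  set B := ((N:ℝ)+1) * (N.choose n : ℝ) *
    Real.exp (-((N:ℝ) * ((n:ℝ)/N) * (1-(n:ℝ)/N) * ε^2 / 2)) with hBdef
  have hB0 : 0 ≤ B := by
    rw [hBdef]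
    positivity
  have hN0 : 0 < N := lt_of_le_of_lt (Nat.zero_le n) hN
  have hcard := Finset.card_eq_sum_card_image (cntOn y) badT
  have hfib : ∀ j ∈ badT.image (cntOn y),
      ((badT.filter fun T => cntOn y T = j).card : ℝ) ≤ B := by
    intro j hj
    obtain ⟨T0, hT0, hT0j⟩ := Finset.mem_image.1 hj
    obtain ⟨-, hT0n, hT0D⟩ :
        T0 ∈ Finset.univ ∧ T0.card = n ∧ ε ≤ ∑ a, |typeOn y T0 a - typeOn y T0ᶜ a| := by
      have := Finset.mem_filter.1 hT0
      exact ⟨this.1, this.2.1, this.2.2⟩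
    have hjk : ∀ a, j a ≤ cnt y a := by
      intro a
      rw [← hT0j]
      exact Finset.card_le_card (Finset.filter_subset_filter _ (Finset.subset_univ T0))
    have hjn : ∑ a, j a = n := by
      rw [← hT0n]
      simp_rw [← hT0j]
      exact (Finset.card_eq_sum_card_fiberwise (fun x _ => Finset.mem_univ (y x))).symm
    have hcompl_card : T0ᶜ.card = N - n := by
      rw [Finset.card_compl, Fintype.card_fin, hT0n]
    have hcompl_cnt : ∀ a, (T0ᶜ.filter fun i => y i = a).card = cnt y a - j a := by
      intro a
      have := cnt_split y T0 a
      rw [← hT0j]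
      unfold cntOn
      omega
    have hD : ε ≤ ∑ a, |(j a:ℝ)/n - ((cnt y a:ℝ)-(j a:ℝ))/((N:ℝ)-n)| := by
      refine le_trans hT0D (le_of_eq (Finset.sum_congr rfl fun a _ => ?_))
      have e1 : typeOn y T0 a = (j a:ℝ)/n := by
        unfold typeOn
        rw [hT0n, ← hT0j]
        rfl
      have e2 : typeOn y T0ᶜ a = ((cnt y a:ℝ)-(j a:ℝ))/((N:ℝ)-n) := by
        unfold typeOn
        rw [hcompl_card, hcompl_cnt a, Nat.cast_sub (hjk a), Nat.cast_sub hN.le]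
      rw [e1, e2]
    have hfiber_nat : (badT.filter fun T => cntOn y T = j).card
        ≤ ∏ a, (cnt y a).choose (j a) :=
      fiber_card_le y j _ (fun T hT => (Finset.mem_filter.1 hT).2)
    calc ((badT.filter fun T => cntOn y T = j).card : ℝ)
        ≤ ((∏ a, (cnt y a).choose (j a) : ℕ) : ℝ) := by exact_mod_cast hfiber_nat
      _ ≤ B := jvec_bound hn hN (cnt y) j hjk (cnt_sum y) hjn hε hD
  have himg : ((badT.image (cntOn y)).card : ℝ) ≤ ((typesSet Y N).ncard : ℝ) := by
    have := card_image_le_ncard (n := n) y hN0 badT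
      (fun T hT => (Finset.mem_filter.1 hT).2.1)
    exact_mod_cast this
  calc (badT.card : ℝ)
      = ∑ j ∈ badT.image (cntOn y), ((badT.filter fun T => cntOn y T = j).card : ℝ) := by
        rw [hcard]
        push_cast
        rfl
    _ ≤ ∑ _j ∈ badT.image (cntOn y), B := Finset.sum_le_sum hfib
    _ = ((badT.image (cntOn y)).card : ℝ) * B := by rw [Finset.sum_const, nsmul_eq_mul]
    _ ≤ ((typesSet Y N).ncard : ℝ) * B := mul_le_mul_of_nonneg_right himg hB0

end TypesCount

end Aux

open Classical in
theorem stmt_13 (Y : Type*) [Fintype Y] [Nonempty Y] (N n : ℕ) (hn : 0 < n) (hN : n < N)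
    (μ : (Fin N → Y) → ℝ) (hμ : IsProbDist μ) (ε : ℝ) (hε : 0 < ε) :
    -- Pr{‖P_{Y'} − P_{Y''}‖₁ ≥ ε}, where Y has law μ and the n-element index set T
    -- is uniform and independent of Y:
    (∑ y : Fin N → Y, μ y *
        (((Finset.univ.filter fun T : Finset (Fin N) =>
            T.card = n ∧ ε ≤ ∑ a, |typeOn y T a - typeOn y Tᶜ a|).card : ℝ) /
          (N.choose n : ℝ))) ≤
      2 * ((typesSet Y N).ncard : ℝ) ^ 2 *
        Real.exp (-(N : ℝ) *
          (Real.sqrt (((N : ℝ) - n) / N * (1 - ((N : ℝ) - n) / N)) /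
              (Real.sqrt (((N : ℝ) - n) / N) + Real.sqrt (1 - ((N : ℝ) - n) / N)) * ε) ^ 2
          / 2) := by
  have hN0 : 0 < N := lt_of_le_of_lt (Nat.zero_le n) hN
  have hN0' : (0:ℝ) < N := by exact_mod_cast hN0
  have hn0' : (0:ℝ) < n := by exact_mod_cast hn
  have hnN' : (n:ℝ) < N := by exact_mod_cast hN
  have hC0 : (0:ℝ) < (N.choose n : ℝ) := by exact_mod_cast Nat.choose_pos hN.le
  set M : ℝ := ((typesSet Y N).ncard : ℝ) with hM
  have hMnn : 0 ≤ M := Nat.cast_nonneg _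
  set E2 : ℝ := Real.exp (-(N : ℝ) *
          (Real.sqrt (((N : ℝ) - n) / N * (1 - ((N : ℝ) - n) / N)) /
              (Real.sqrt (((N : ℝ) - n) / N) + Real.sqrt (1 - ((N : ℝ) - n) / N)) * ε) ^ 2
          / 2) with hE2
  have hE2pos : 0 < E2 := Real.exp_pos _
  by_cases hsing : ∀ b c : Y, b = c
  · -- singleton alphabet: the bad event is empty
    have hzero : ∀ y : Fin N → Y, (Finset.univ.filter fun T : Finset (Fin N) =>
        T.card = n ∧ ε ≤ ∑ a, |typeOn y T a - typeOn y Tᶜ a|) = ∅ := by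
      intro y
      rw [Finset.filter_false_of_mem]
      rintro T - ⟨hTn, hTD⟩
      have hTerm : ∀ a : Y, typeOn y T a - typeOn y Tᶜ a = 0 := by
        intro a
        have h1 : (T.filter fun i => y i = a) = T :=
          Finset.filter_true_of_mem (fun i _ => hsing (y i) a)
        have h2 : (Tᶜ.filter fun i => y i = a) = Tᶜ :=
          Finset.filter_true_of_mem (fun i _ => hsing (y i) a)
        have hc : Tᶜ.card = N - n := by
          rw [Finset.card_compl, Fintype.card_fin, hTn]
        unfold typeOn
        rw [h1, h2, hTn, hc]
        rw [div_self (by exact_mod_cast hn.ne' : ((n:ℕ):ℝ) ≠ 0),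
          div_self (by
            have : 0 < N - n := by omega
            exact_mod_cast this.ne' : ((N - n : ℕ):ℝ) ≠ 0)]
        ring
      have : ∑ a, |typeOn y T a - typeOn y Tᶜ a| = 0 := by
        apply Finset.sum_eq_zero
        intro a _
        rw [hTerm a, abs_zero]
      rw [this] at hTD
      linarith
    have : ∀ y : Fin N → Y, μ y * (((Finset.univ.filter fun T : Finset (Fin N) =>
        T.card = n ∧ ε ≤ ∑ a, |typeOn y T a - typeOn y Tᶜ a|).card : ℝ) /
          (N.choose n : ℝ)) = 0 := by
      intro y
      rw [hzero y]
      simp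
    rw [Finset.sum_congr rfl fun y _ => this y, Finset.sum_const, smul_zero]
    positivity
  · -- two distinct letters
    push_neg at hsing
    obtain ⟨b, c, hbc⟩ := hsing
    have hM1 : (N:ℝ) + 1 ≤ M := le_ncard_typesSet hN0 hbc
    have hM0 : (0:ℝ) < M := lt_of_lt_of_le (by positivity) hM1
    -- exponent comparison
    have hbg : 1 - ((N:ℝ)-n)/N = (n:ℝ)/N := by field_simp; ring
    have hgb : 1 - (n:ℝ)/N = ((N:ℝ)-n)/N := by field_simp
    have hA0 : (0:ℝ) < ((N:ℝ)-n)/N := by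
      apply div_pos _ hN0'
      linarith
    have hB0 : (0:ℝ) < (n:ℝ)/N := by positivity
    have hAB : ((N:ℝ)-n)/N + (n:ℝ)/N = 1 := by field_simp; ring
    have hgε : (Real.sqrt (((N : ℝ) - n) / N * (1 - ((N : ℝ) - n) / N)) /
              (Real.sqrt (((N : ℝ) - n) / N) + Real.sqrt (1 - ((N : ℝ) - n) / N)) * ε) ^ 2
          ≤ ((n:ℝ)/N) * (1 - (n:ℝ)/N) * ε^2 := by
      rw [hbg, hgb]
      set A : ℝ := ((N:ℝ)-n)/N
      set B : ℝ := (n:ℝ)/N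
      have hs1 : 1 ≤ (Real.sqrt A + Real.sqrt B)^2 := by
        rw [add_sq, Real.sq_sqrt hA0.le, Real.sq_sqrt hB0.le]
        nlinarith [Real.sqrt_nonneg A, Real.sqrt_nonneg B]
      rw [mul_pow, div_pow, Real.sq_sqrt (by positivity : (0:ℝ) ≤ A * B)]
      have h1 : A * B / (Real.sqrt A + Real.sqrt B)^2 ≤ A * B := by
        apply div_le_self (by positivity) hs1
      calc A * B / (Real.sqrt A + Real.sqrt B)^2 * ε^2 ≤ A * B * ε^2 := by
            apply mul_le_mul_of_nonneg_right h1 (sq_nonneg ε)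
        _ = B * A * ε^2 := by ring
    have hexple : Real.exp (-((N:ℝ) * ((n:ℝ)/N) * (1-(n:ℝ)/N) * ε^2 / 2)) ≤ E2 := by
      rw [hE2]
      apply Real.exp_le_exp.2
      have := mul_le_mul_of_nonneg_left hgε hN0'.le
      rw [show -(N:ℝ) * (Real.sqrt (((N : ℝ) - n) / N * (1 - ((N : ℝ) - n) / N)) /
              (Real.sqrt (((N : ℝ) - n) / N) + Real.sqrt (1 - ((N : ℝ) - n) / N)) * ε) ^ 2 / 2
          = -((N:ℝ) * (Real.sqrt (((N : ℝ) - n) / N * (1 - ((N : ℝ) - n) / N)) /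
              (Real.sqrt (((N : ℝ) - n) / N) + Real.sqrt (1 - ((N : ℝ) - n) / N)) * ε) ^ 2 / 2)
          by ring]
      apply neg_le_neg
      apply div_le_div_of_nonneg_right _ (by norm_num)
      calc (N:ℝ) * (Real.sqrt (((N : ℝ) - n) / N * (1 - ((N : ℝ) - n) / N)) /
              (Real.sqrt (((N : ℝ) - n) / N) + Real.sqrt (1 - ((N : ℝ) - n) / N)) * ε) ^ 2
          ≤ (N:ℝ) * (((n:ℝ)/N) * (1 - (n:ℝ)/N) * ε^2) := this
        _ = (N:ℝ) * ((n:ℝ)/N) * (1-(n:ℝ)/N) * ε^2 := by ring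
    -- per-y bound
    have hy : ∀ y : Fin N → Y, (((Finset.univ.filter fun T : Finset (Fin N) =>
            T.card = n ∧ ε ≤ ∑ a, |typeOn y T a - typeOn y Tᶜ a|).card : ℝ) /
          (N.choose n : ℝ)) ≤ 2 * M^2 * E2 := by
      intro y
      rw [div_le_iff₀ hC0]
      calc ((Finset.univ.filter fun T : Finset (Fin N) =>
            T.card = n ∧ ε ≤ ∑ a, |typeOn y T a - typeOn y Tᶜ a|).card : ℝ)
          ≤ M * (((N:ℝ)+1) * (N.choose n : ℝ) *
              Real.exp (-((N:ℝ) * ((n:ℝ)/N) * (1-(n:ℝ)/N) * ε^2 / 2))) :=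
            count_bound hn hN hε y
        _ = (((N:ℝ)+1) * Real.exp (-((N:ℝ) * ((n:ℝ)/N) * (1-(n:ℝ)/N) * ε^2 / 2))) *
              (M * (N.choose n : ℝ)) := by ring
        _ ≤ (M * E2) * (M * (N.choose n : ℝ)) := by
            apply mul_le_mul_of_nonneg_right _ (by positivity)
            exact mul_le_mul hM1 hexple (Real.exp_pos _).le hM0.le
        _ = M^2 * E2 * (N.choose n : ℝ) := by ring
        _ ≤ 2 * M^2 * E2 * (N.choose n : ℝ) := by
            have h0 : 0 ≤ M^2 * E2 * (N.choose n : ℝ) := by positivity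
            linarith
    calc (∑ y : Fin N → Y, μ y *
        (((Finset.univ.filter fun T : Finset (Fin N) =>
            T.card = n ∧ ε ≤ ∑ a, |typeOn y T a - typeOn y Tᶜ a|).card : ℝ) /
          (N.choose n : ℝ)))
        ≤ ∑ y : Fin N → Y, μ y * (2 * M^2 * E2) := by
          apply Finset.sum_le_sum
          intro y _
          exact mul_le_mul_of_nonneg_left (hy y) (hμ.1 y)
      _ = 2 * M^2 * E2 := by
          rw [← Finset.sum_mul, hμ.2, one_mul]

end
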